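/- Every expansion of a weakly 4-connected graph is 3-connected. -/

import Mathlib

open SimpleGraph

universe u v

/-! ### Basic connectivity notions -/

/-- A graph is 3-connected: at least 4 vertices and deleting any ≤ 2 vertices
leaves a connected graph. -/
def ThreeConnected {V : Type u} (G : SimpleGraph V) : Prop :=
  4 ≤ Nat.card V ∧
    ∀ s : Set V, s.ncard ≤ 2 → ((⊤ : G.Subgraph).deleteVerts s).coe.Connected

/-- A separation of `G`: `A ∪ B = V(G)` and no edge between `A \ B` and `B \ A`. -/
def Separation {V : Type u} (G : SimpleGraph V) (A B : Set V) : Prop :=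
  A ∪ B = Set.univ ∧ ∀ a ∈ A \ B, ∀ b ∈ B \ A, ¬ G.Adj a b

/-- The edges of `G` induced by a vertex set `A`. -/
def inducedEdges {V : Type u} (G : SimpleGraph V) (A : Set V) : Set (Sym2 V) :=
  {e ∈ G.edgeSet | ∀ x ∈ e, x ∈ A}

/-- Weakly 4-connected: 3-connected, at least 5 vertices, and every separation of order
at most three has a side inducing at most 4 edges. -/
def WeaklyFourConnected {V : Type u} (G : SimpleGraph V) : Prop :=
  ThreeConnected G ∧ 5 ≤ Nat.card V ∧
    ∀ A B : Set V, Separation G A B → (A ∩ B).ncard ≤ 3 →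
      (inducedEdges G A).ncard ≤ 4 ∨ (inducedEdges G B).ncard ≤ 4

/-! ### Vertex splitting and expansions -/

/-- Valid data for splitting vertex `v`: `N1, N2` partition the neighborhood of `v`
with each part of size at least 2. -/
def IsValidSplitData {V : Type u} (G : SimpleGraph V) (v : V) (N1 N2 : Set V) : Prop :=
  N1 ∪ N2 = G.neighborSet v ∧ Disjoint N1 N2 ∧ 2 ≤ N1.ncard ∧ 2 ≤ N2.ncard

/-- The graph obtained by splitting vertex `v` according to the partition `N1, N2`.
The vertex `some v` plays the role of `v₁` and `none` plays the role of `v₂`;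
vertices `some a` for `a ≠ v` are the old vertices. -/
def splitGraph {V : Type u} (G : SimpleGraph V) (v : V) (N1 N2 : Set V) :
    SimpleGraph (Option V) :=
  SimpleGraph.fromRel (fun x y =>
    (∃ a b, x = some a ∧ y = some b ∧ a ≠ v ∧ b ≠ v ∧ G.Adj a b) ∨
    (x = some v ∧ ∃ b ∈ N1, y = some b) ∨
    (x = none ∧ ∃ b ∈ N2, y = some b) ∨
    (x = none ∧ y = some v))

/-- `IsExpansion G G' π newE`: `G'` is obtained from `G` by repeatedly splitting
vertices of degree at least four; `π` maps each vertex of `G'` to the vertex of `G`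
it arose from (so the branch-sets are the fibres of `π`) and `newE` is the set of
new edges created by the splits. -/
inductive IsExpansion {V : Type u} (G : SimpleGraph V) :
    {W : Type u} → SimpleGraph W → (W → V) → Set (Sym2 W) → Prop
  | refl : IsExpansion G G id ∅
  | step {W : Type u} {G' : SimpleGraph W} {π : W → V} {newE : Set (Sym2 W)}
      (h : IsExpansion G G' π newE) (v : W) (N1 N2 : Set W)
      (hs : IsValidSplitData G' v N1 N2) :
      IsExpansion G (splitGraph G' v N1 N2) (fun w => π (w.getD v))
        (Sym2.map some '' newE ∪ {s(some v, none)})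

/-! ### Minors -/

/-- `G` is isomorphic to a minor of `H`: there are disjoint nonempty connected
branch sets in `H`, one for each vertex of `G`, with edges of `G` realized by
edges of `H` between the corresponding branch sets. -/
def IsMinorOf {V : Type u} {W : Type v} (G : SimpleGraph V) (H : SimpleGraph W) : Prop :=
  ∃ f : V → Set W,
    (∀ a, (f a).Nonempty) ∧
    (∀ a, (H.induce (f a)).Connected) ∧
    (∀ a b, a ≠ b → Disjoint (f a) (f b)) ∧
    (∀ a b, G.Adj a b → ∃ x ∈ f a, ∃ y ∈ f b, H.Adj x y)

/-! ### Cycles, segments, disk systems -/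

/-- A subgraph is a cycle: nonempty, connected, and every vertex has exactly
two neighbours in it. -/
def IsCycleSub {V : Type u} {G : SimpleGraph V} (C : G.Subgraph) : Prop :=
  C.verts.Nonempty ∧ C.Connected ∧ ∀ w ∈ C.verts, (C.neighborSet w).ncard = 2

/-- A subgraph is a path: nonempty, connected, maximum degree at most two, and
some vertex of degree at most one. -/
def IsPathSub {V : Type u} {G : SimpleGraph V} (P : G.Subgraph) : Prop :=
  P.verts.Nonempty ∧ P.Connected ∧ (∀ w ∈ P.verts, (P.neighborSet w).ncard ≤ 2) ∧
    ∃ w ∈ P.verts, (P.neighborSet w).ncard ≤ 1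

/-- A segment of `G`: a maximal path (with at least one edge) all of whose internal
vertices have degree exactly two in `G`. -/
def IsSegment {V : Type u} (G : SimpleGraph V) (P : G.Subgraph) : Prop :=
  IsPathSub P ∧ P.edgeSet.Nonempty ∧
    (∀ w ∈ P.verts, (P.neighborSet w).ncard = 2 → (G.neighborSet w).ncard = 2) ∧
    (∀ w ∈ P.verts, (P.neighborSet w).ncard ≤ 1 → (G.neighborSet w).ncard ≠ 2)

/-- Axiom (D1): a cycle double cover: a set of cycles such that every edge of `G`
lies on exactly two of them. -/
def IsCDC {V : Type u} (G : SimpleGraph V) (D : Set G.Subgraph) : Prop :=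
  (∀ C ∈ D, IsCycleSub C) ∧ ∀ e ∈ G.edgeSet, {C ∈ D | e ∈ C.edgeSet}.ncard = 2

/-- Axiom (D2): at every vertex the incident edges admit a cyclic order in which
every pair of consecutive edges lies on exactly one common disk. -/
def AxiomD2 {V : Type u} (G : SimpleGraph V) (D : Set G.Subgraph) : Prop :=
  ∀ w : V, ∃ σ : Equiv.Perm (G.neighborSet w),
    (∀ x y, σ.SameCycle x y) ∧
    ∀ u : G.neighborSet w,
      {C ∈ D | s(w, (u : V)) ∈ C.edgeSet ∧ s(w, ((σ u : G.neighborSet w) : V)) ∈ C.edgeSet}.ncard = 1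

/-- Axiom (D3): any two distinct disks intersect in at most one vertex or in a segment. -/
def AxiomD3 {V : Type u} (G : SimpleGraph V) (D : Set G.Subgraph) : Prop :=
  ∀ C1 ∈ D, ∀ C2 ∈ D, C1 ≠ C2 → (C1 ⊓ C2).verts.Subsingleton ∨ IsSegment G (C1 ⊓ C2)

/-- A weak disk system: a cycle double cover satisfying (D3). -/
def IsWeakDiskSystem {V : Type u} (G : SimpleGraph V) (D : Set G.Subgraph) : Prop :=
  IsCDC G D ∧ AxiomD3 G D

/-- A disk system: a cycle double cover satisfying (D2) and (D3). -/
def IsDiskSystem {V : Type u} (G : SimpleGraph V) (D : Set G.Subgraph) : Prop :=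
  IsCDC G D ∧ AxiomD2 G D ∧ AxiomD3 G D

/-- Two vertices are confluent if a common disk contains both. -/
def ConfluentVV {V : Type u} {G : SimpleGraph V} (D : Set G.Subgraph) (x y : V) : Prop :=
  ∃ C ∈ D, x ∈ C.verts ∧ y ∈ C.verts

/-- A vertex is confluent with an edge if a common disk contains both. -/
def ConfluentVE {V : Type u} {G : SimpleGraph V} (D : Set G.Subgraph) (x : V) (e : Sym2 V) : Prop :=
  ∃ C ∈ D, x ∈ C.verts ∧ e ∈ C.edgeSet

/-- Two edges are confluent if a common disk contains both. -/
def ConfluentEE {V : Type u} {G : SimpleGraph V} (D : Set G.Subgraph) (e f : Sym2 V) : Prop :=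
  ∃ C ∈ D, e ∈ C.edgeSet ∧ f ∈ C.edgeSet

/-! ### Conforming splits -/

/-- The split of `v` along disks `D1, D2`: it is a valid split and, among the disks
through `v`, exactly `D1` and `D2` meet both `N1` and `N2`, and they intersect
precisely in `v` (axioms (S1) and (S2)). -/
def SplitConformingWith {V : Type u} (G : SimpleGraph V) (D : Set G.Subgraph) (v : V)
    (N1 N2 : Set V) (D1 D2 : G.Subgraph) : Prop :=
  IsValidSplitData G v N1 N2 ∧ D1 ∈ D ∧ D2 ∈ D ∧ D1 ≠ D2 ∧
    {C ∈ D | v ∈ C.verts ∧ (C.verts ∩ N1).Nonempty ∧ (C.verts ∩ N2).Nonempty} = {D1, D2} ∧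
    (D1 ⊓ D2).verts = {v}

/-- A conforming split (with respect to `D`). -/
def IsConformingSplit {V : Type u} (G : SimpleGraph V) (D : Set G.Subgraph) (v : V)
    (N1 N2 : Set V) : Prop :=
  ∃ D1 D2, SplitConformingWith G D v N1 N2 D1 D2

/-- A conforming split along the disk `C`. -/
def IsConformingSplitAlong {V : Type u} (G : SimpleGraph V) (D : Set G.Subgraph) (v : V)
    (N1 N2 : Set V) (C : G.Subgraph) : Prop :=
  ∃ E, SplitConformingWith G D v N1 N2 C E ∨ SplitConformingWith G D v N1 N2 E C

/-- `C'` (a cycle of the split graph) lifts the cycle `C` of `G`: contracting the new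
edge maps `C'` onto `C`. -/
def DiskLift {V : Type u} (G : SimpleGraph V) (v : V) {N1 N2 : Set V}
    (C' : (splitGraph G v N1 N2).Subgraph) (C : G.Subgraph) : Prop :=
  C.verts = (fun w : Option V => w.getD v) '' C'.verts ∧
  C.edgeSet = Sym2.map (fun w : Option V => w.getD v) '' C'.edgeSet \ {s(v, v)}

/-- The disk system induced in the split graph: the cycles that lift disks of `D`. -/
def InducedDisks {V : Type u} (G : SimpleGraph V) (D : Set G.Subgraph) (v : V)
    (N1 N2 : Set V) : Set (splitGraph G v N1 N2).Subgraph :=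
  {C' | IsCycleSub C' ∧ ∃ C ∈ D, DiskLift G v C' C}

/-- Conforming expansions, together with the induced disk system and the set of new
edges. Each successive split is conforming with respect to the disk system induced
so far. -/
inductive IsConformingExpansion {V : Type u} (G : SimpleGraph V) (D : Set G.Subgraph) :
    {W : Type u} → (G' : SimpleGraph W) → Set G'.Subgraph → Set (Sym2 W) → Prop
  | refl : IsConformingExpansion G D G D ∅
  | step {W : Type u} {G' : SimpleGraph W} {D' : Set G'.Subgraph} {newE : Set (Sym2 W)}
      (h : IsConformingExpansion G D G' D' newE) (v : W) (N1 N2 : Set W)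
      (hc : IsConformingSplit G' D' v N1 N2) :
      IsConformingExpansion G D (splitGraph G' v N1 N2) (InducedDisks G' D' v N1 N2)
        (Sym2.map some '' newE ∪ {s(some v, none)})

/-- A non-conforming expansion: a conforming expansion followed by a non-conforming
split, followed by an arbitrary further expansion. -/
def IsNonConformingExpansion {V W : Type u} (G : SimpleGraph V) (D : Set G.Subgraph)
    (H : SimpleGraph W) : Prop :=
  ∃ (W₁ : Type u) (G₁ : SimpleGraph W₁) (D₁ : Set G₁.Subgraph) (newE₁ : Set (Sym2 W₁)),
    IsConformingExpansion G D G₁ D₁ newE₁ ∧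
    ∃ (v : W₁) (N1 N2 : Set W₁), IsValidSplitData G₁ v N1 N2 ∧
      ¬ IsConformingSplit G₁ D₁ v N1 N2 ∧
      ∃ (π : W → Option W₁) (newE : Set (Sym2 W)),
        IsExpansion (splitGraph G₁ v N1 N2) H π newE

/-! ### Building blocks for the enlargement operations -/

/-- Add the edge `uv` to `G`. -/
def addE {V : Type u} (G : SimpleGraph V) (x y : V) : SimpleGraph V :=
  G ⊔ SimpleGraph.fromEdgeSet {s(x, y)}

/-- Add a new vertex (`none`) adjacent exactly to the vertices of `S`. -/
def addVertexAdj {V : Type u} (G : SimpleGraph V) (S : Set V) : SimpleGraph (Option V) :=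
  SimpleGraph.fromRel (fun x y =>
    (∃ a b, x = some a ∧ y = some b ∧ G.Adj a b) ∨ (x = none ∧ ∃ a ∈ S, y = some a))

/-- Subdivide the edge `xy` (the new vertex is `none`) and join `u` to the new vertex. -/
def subdivideJoin {V : Type u} (G : SimpleGraph V) (x y u : V) : SimpleGraph (Option V) :=
  SimpleGraph.fromRel (fun a b =>
    (∃ p q, a = some p ∧ b = some q ∧ G.Adj p q ∧ s(p, q) ≠ s(x, y)) ∨
    (a = none ∧ (b = some x ∨ b = some y ∨ b = some u)))

/-- Subdivide the edges `ab` and `cd` (new vertices `some none` and `none`) and join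
the two new vertices by an edge. -/
def doubleSubdivideJoin {V : Type u} (G : SimpleGraph V) (a b c d : V) :
    SimpleGraph (Option (Option V)) :=
  SimpleGraph.fromRel (fun p q =>
    (∃ x y, p = some (some x) ∧ q = some (some y) ∧ G.Adj x y ∧
        s(x, y) ≠ s(a, b) ∧ s(x, y) ≠ s(c, d)) ∨
    (p = some none ∧ (q = some (some a) ∨ q = some (some b))) ∨
    (p = none ∧ (q = some (some c) ∨ q = some (some d) ∨ q = some none)))

/-- `a, b, c, d` occur on the cycle `C` in this cyclic order (in one of the two
orientations): `{a,c}` separates `b` from `d` on `C` and vice versa. -/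
def CyclicOrderOn {V : Type u} {G : SimpleGraph V} (C : G.Subgraph) (a b c d : V) : Prop :=
  a ∈ C.verts ∧ b ∈ C.verts ∧ c ∈ C.verts ∧ d ∈ C.verts ∧
  [a, b, c, d].Nodup ∧
  (∀ (hb : b ∈ (C.deleteVerts {a, c}).verts) (hd : d ∈ (C.deleteVerts {a, c}).verts),
    ¬ (C.deleteVerts {a, c}).coe.Reachable ⟨b, hb⟩ ⟨d, hd⟩) ∧
  (∀ (ha : a ∈ (C.deleteVerts {b, d}).verts) (hc : c ∈ (C.deleteVerts {b, d}).verts),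
    ¬ (C.deleteVerts {b, d}).coe.Reachable ⟨a, ha⟩ ⟨c, hc⟩)

/-! ### The enlargement operations, phrased as "H has a minor isomorphic to a
type-i enlargement of G with respect to D" -/

/-- Type 1 (non-conforming jump). -/
def HasType1Minor {V : Type u} {U : Type v} (G : SimpleGraph V) (D : Set G.Subgraph)
    (H : SimpleGraph U) : Prop :=
  ∃ x y : V, x ≠ y ∧ ¬ ConfluentVV D x y ∧ IsMinorOf (addE G x y) H

/-- Type 2 (cross). -/
def HasType2Minor {V : Type u} {U : Type v} (G : SimpleGraph V) (D : Set G.Subgraph)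
    (H : SimpleGraph U) : Prop :=
  ∃ C ∈ D, ∃ a b c d : V, CyclicOrderOn C a b c d ∧
    IsMinorOf (addE (addE G a c) b d) H

/-- Type 3 (non-conforming split). -/
def HasType3Minor {V : Type u} {U : Type v} (G : SimpleGraph V) (D : Set G.Subgraph)
    (H : SimpleGraph U) : Prop :=
  ∃ (w : V) (N1 N2 : Set V), IsValidSplitData G w N1 N2 ∧
    ¬ IsConformingSplit G D w N1 N2 ∧ IsMinorOf (splitGraph G w N1 N2) H

/-- Type 4 (split + non-conforming jump). In `splitGraph G v N1 N2` the vertices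
`some v` and `none` play the roles of `v₁` and `v₂`. -/
def HasType4Minor {V : Type u} {U : Type v} (G : SimpleGraph V) (D : Set G.Subgraph)
    (H : SimpleGraph U) : Prop :=
  ∃ C ∈ D, ∃ x w : V, x ∈ C.verts ∧ w ∈ C.verts ∧ ¬ G.Adj x w ∧ x ≠ w ∧
    ∃ N1 N2 : Set V, IsConformingSplit G D w N1 N2 ∧
      ¬ ConfluentVV (InducedDisks G D w N1 N2) (some x) none ∧
      IsMinorOf (addE (splitGraph G w N1 N2) (some x) none) H

/-- Type 5 (double split + non-conforming jump). -/
def HasType5Minor {V : Type u} {U : Type v} (G : SimpleGraph V) (D : Set G.Subgraph)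
    (H : SimpleGraph U) : Prop :=
  ∃ x w : V, G.Adj x w ∧ ∃ C1 ∈ D, ∃ C2 ∈ D, C1 ≠ C2 ∧
    s(x, w) ∈ C1.edgeSet ∧ s(x, w) ∈ C2.edgeSet ∧
    ∃ M1 M2 : Set V, IsConformingSplitAlong G D x M1 M2 C1 ∧ w ∈ M1 ∧
    ∃ C2' ∈ InducedDisks G D x M1 M2, DiskLift G x C2' C2 ∧
    ∃ P1 P2 : Set (Option V),
      IsConformingSplitAlong (splitGraph G x M1 M2) (InducedDisks G D x M1 M2)
        (some w) P1 P2 C2' ∧ (some x) ∈ P1 ∧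
      IsMinorOf (addE (splitGraph (splitGraph G x M1 M2) (some w) P1 P2)
        (some none) none) H

/-- Type 6 (split + cross). -/
def HasType6Minor {V : Type u} {U : Type v} (G : SimpleGraph V) (D : Set G.Subgraph)
    (H : SimpleGraph U) : Prop :=
  ∃ C ∈ D, ∃ x w z : V, x ∈ C.verts ∧ w ∈ C.verts ∧ z ∈ C.verts ∧
    ¬ G.Adj x w ∧ ¬ G.Adj x z ∧ w ≠ z ∧ x ≠ w ∧ x ≠ z ∧
    ∃ N1 N2 : Set V, IsConformingSplitAlong G D x N1 N2 C ∧
    ∃ C' ∈ InducedDisks G D x N1 N2, DiskLift G x C' C ∧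
      CyclicOrderOn C' (some x) none (some w) (some z) ∧
      IsMinorOf (addE (addE (splitGraph G x N1 N2) (some x) (some w)) none (some z)) H

/-- Type 7 (double split + cross). -/
def HasType7Minor {V : Type u} {U : Type v} (G : SimpleGraph V) (D : Set G.Subgraph)
    (H : SimpleGraph U) : Prop :=
  ∃ C ∈ D, ∃ x w : V, x ∈ C.verts ∧ w ∈ C.verts ∧ ¬ G.Adj x w ∧ x ≠ w ∧
    ∃ M1 M2 : Set V, IsConformingSplitAlong G D x M1 M2 C ∧
    ∃ C' ∈ InducedDisks G D x M1 M2, DiskLift G x C' C ∧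
    ∃ P1 P2 : Set (Option V),
      IsConformingSplitAlong (splitGraph G x M1 M2) (InducedDisks G D x M1 M2)
        (some w) P1 P2 C' ∧
    ∃ C'' ∈ InducedDisks (splitGraph G x M1 M2) (InducedDisks G D x M1 M2) (some w) P1 P2,
      DiskLift (splitGraph G x M1 M2) (some w) C'' C' ∧
      CyclicOrderOn C'' (some (some x)) (some none) (some (some w)) none ∧
      IsMinorOf (addE (addE (splitGraph (splitGraph G x M1 M2) (some w) P1 P2)
        (some (some x)) (some (some w))) (some none) none) H

/-- Weak type 8 (weak triad): add a vertex adjacent to three vertices not all on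
a common disk. -/
def HasWeakType8Minor {V : Type u} {U : Type v} (G : SimpleGraph V) (D : Set G.Subgraph)
    (H : SimpleGraph U) : Prop :=
  ∃ x1 x2 x3 : V, x1 ≠ x2 ∧ x1 ≠ x3 ∧ x2 ≠ x3 ∧
    (¬ ∃ C ∈ D, x1 ∈ C.verts ∧ x2 ∈ C.verts ∧ x3 ∈ C.verts) ∧
    IsMinorOf (addVertexAdj G {x1, x2, x3}) H

/-- Type 8 (non-separating triad). -/
def HasType8Minor {V : Type u} {U : Type v} (G : SimpleGraph V) (D : Set G.Subgraph)
    (H : SimpleGraph U) : Prop :=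
  ∃ x1 x2 x3 : V, x1 ≠ x2 ∧ x1 ≠ x3 ∧ x2 ≠ x3 ∧
    ConfluentVV D x1 x2 ∧ ConfluentVV D x1 x3 ∧ ConfluentVV D x2 x3 ∧
    (¬ ∃ C ∈ D, x1 ∈ C.verts ∧ x2 ∈ C.verts ∧ x3 ∈ C.verts) ∧
    ¬ G.Adj x1 x2 ∧ ¬ G.Adj x1 x3 ∧ ¬ G.Adj x2 x3 ∧
    ((⊤ : G.Subgraph).deleteVerts {x1, x2, x3}).coe.Connected ∧
    IsMinorOf (addVertexAdj G {x1, x2, x3}) H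

/-- Weak type 9 (weak non-conforming T-edge). -/
def HasWeakType9Minor {V : Type u} {U : Type v} (G : SimpleGraph V) (D : Set G.Subgraph)
    (H : SimpleGraph U) : Prop :=
  ∃ x y z : V, G.Adj x y ∧ ¬ ConfluentVE D z s(x, y) ∧
    IsMinorOf (subdivideJoin G x y z) H

/-- Type 9 (non-conforming T-edge). -/
def HasType9Minor {V : Type u} {U : Type v} (G : SimpleGraph V) (D : Set G.Subgraph)
    (H : SimpleGraph U) : Prop :=
  ∃ x y z : V, G.Adj x y ∧ ¬ ConfluentVE D z s(x, y) ∧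
    ConfluentVV D z x ∧ ConfluentVV D z y ∧ ¬ G.Adj z x ∧ ¬ G.Adj z y ∧
    ((⊤ : G.Subgraph).deleteVerts {z, x, y}).coe.Connected ∧
    IsMinorOf (subdivideJoin G x y z) H

/-! ### Prism, peripheral cycles, planarity -/

/-- The prism: the complement of a 6-cycle on six vertices. -/
def prismGraph : SimpleGraph (Fin 6) :=
  (SimpleGraph.fromRel (fun i j : Fin 6 => j = i + 1))ᶜ

def IsPrism {V : Type u} (G : SimpleGraph V) : Prop :=
  Nonempty (G ≃g prismGraph)

/-- A peripheral cycle: an induced cycle whose deletion leaves a connected graph. -/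
def IsPeripheral {V : Type u} (G : SimpleGraph V) (C : G.Subgraph) : Prop :=
  IsCycleSub C ∧ C.IsInduced ∧ ((⊤ : G.Subgraph).deleteVerts C.verts).coe.Connected

/-- The set of all peripheral cycles of `G`. -/
def peripheralDisks {V : Type u} (G : SimpleGraph V) : Set G.Subgraph :=
  {C | IsPeripheral G C}

/-- Planarity, encoded via Wagner's theorem: no `K₅` and no `K₃,₃` minor. -/
def IsPlanar {V : Type u} (G : SimpleGraph V) : Prop :=
  ¬ IsMinorOf (completeGraph (Fin 5)) G ∧
  ¬ IsMinorOf (completeBipartiteGraph (Fin 3) (Fin 3)) G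

/-- Type 10 (the enlargement of a prism, i.e. `V₈`). -/
def HasType10Minor {V : Type u} {U : Type v} (G : SimpleGraph V) (H : SimpleGraph U) : Prop :=
  IsPrism G ∧ ∃ a b c d : V, G.Adj a b ∧ G.Adj c d ∧ s(a, b) ≠ s(c, d) ∧
    (∃ t, G.Adj a t ∧ G.Adj b t) ∧ (∃ t, G.Adj c t ∧ G.Adj d t) ∧
    (¬ ∃ C : G.Subgraph, IsPeripheral G C ∧ s(a, b) ∈ C.edgeSet ∧ s(c, d) ∈ C.edgeSet) ∧
    IsMinorOf (doubleSubdivideJoin G a b c d) H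

/-! ### Subdivisions -/

/-- Data witnessing that `S` is (isomorphic to) a subdivision of `Gb`:
an injection `f` of branch-vertices together with internally disjoint paths of `S`,
one for each edge of `Gb`, covering `S`. -/
structure SubdivisionData {V : Type u} {W : Type v} (S : SimpleGraph V)
    (Gb : SimpleGraph W) where
  f : W → V
  path : ∀ a b : W, Gb.Adj a b → S.Walk (f a) (f b)
  inj : Function.Injective f
  isPath : ∀ a b hab, (path a b hab).IsPath
  symmSupport : ∀ a b (hab : Gb.Adj a b),
    (path b a hab.symm).support = (path a b hab).support.reverse
  interDisj : ∀ a b hab c d hcd, s(a, b) ≠ s(c, d) →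
    ∀ x, x ∈ (path a b hab).support → x ∈ (path c d hcd).support → x ∈ Set.range f
  branchOnPath : ∀ a b hab (w : W), f w ∈ (path a b hab).support → w = a ∨ w = b
  coverV : ∀ x : V, x ∈ Set.range f ∨ ∃ a b hab, x ∈ (path a b hab).support
  coverE : ∀ e ∈ S.edgeSet, ∃ a b hab, e ∈ (path a b hab).edges

/-- `G` is a subdivision of `Gb`. -/
def IsSubdivisionOf {V : Type u} {W : Type v} (S : SimpleGraph V) (Gb : SimpleGraph W) : Prop :=
  Nonempty (SubdivisionData S Gb)

/-- The cycle of the subdivision corresponding to a cycle `C` of the base graph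
(the union of the paths replacing the edges of `C`). -/
def SubdivisionData.inducedDisk {V : Type u} {W : Type v} {S : SimpleGraph V}
    {Gb : SimpleGraph W} (sd : SubdivisionData S Gb) (C : Gb.Subgraph) : S.Subgraph where
  verts := {x | ∃ (a b : W) (hC : C.Adj a b), x ∈ (sd.path a b (C.adj_sub hC)).support}
  Adj x y := ∃ (a b : W) (hC : C.Adj a b), s(x, y) ∈ (sd.path a b (C.adj_sub hC)).edges
  adj_sub := by
    rintro x y ⟨a, b, hC, he⟩
    exact (SimpleGraph.mem_edgeSet S).mp ((sd.path a b (C.adj_sub hC)).edges_subset_edgeSet he)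
  edge_vert := by
    rintro x y ⟨a, b, hC, he⟩
    exact ⟨a, b, hC, SimpleGraph.Walk.fst_mem_support_of_mem_edges _ he⟩
  symm := by
    constructor
    rintro x y ⟨a, b, hC, he⟩
    exact ⟨a, b, hC, by rwa [Sym2.eq_swap]⟩

/-- The weak disk system induced in the subdivision by a system of the base graph. -/
def SubdivisionData.inducedDisks {V : Type u} {W : Type v} {S : SimpleGraph V}
    {Gb : SimpleGraph W} (sd : SubdivisionData S Gb) (D : Set Gb.Subgraph) :
    Set S.Subgraph :=
  sd.inducedDisk '' D

/-! ### Bridges and locally planar extensions -/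

/-- `B` is an `S`-bridge of `H`: either a single edge of `H` not in `S` with both ends
in `S`, or a component of `H − V(S)` together with all edges to `S`. -/
def IsBridgeOf {U : Type u} {H : SimpleGraph U} (S B : H.Subgraph) : Prop :=
  (∃ x y : U, H.Adj x y ∧ s(x, y) ∉ S.edgeSet ∧ x ∈ S.verts ∧ y ∈ S.verts ∧
      B.verts = {x, y} ∧ ∀ p q, B.Adj p q ↔ s(p, q) = s(x, y)) ∨
  (∃ J : Set U, J.Nonempty ∧ J ∩ S.verts = ∅ ∧
    (∀ x ∈ J, ∀ y, H.Adj x y → y ∉ S.verts → y ∈ J) ∧ (H.induce J).Connected ∧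
    B.verts = J ∪ {y ∈ S.verts | ∃ x ∈ J, H.Adj x y} ∧
    ∀ p q, B.Adj p q ↔ (H.Adj p q ∧ (p ∈ J ∨ q ∈ J)))

/-- The induced system `D` (of cycles of `S.coe`) is locally planar in `H`:
every bridge attaches to a single disk, and for each disk the union of the disk
with its bridges has a planar drawing with the disk bounding the unbounded face
(encoded: adding an apex vertex joined to the disk keeps the graph planar). -/
def LocallyPlanar {U : Type u} (H : SimpleGraph U) (S : H.Subgraph)
    (D : Set S.coe.Subgraph) : Prop :=
  ∃ φ : H.Subgraph → S.coe.Subgraph,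
    (∀ B, IsBridgeOf S B → φ B ∈ D ∧
      ∀ x ∈ B.verts ∩ S.verts, x ∈ Subtype.val '' (φ B).verts) ∧
    ∀ C ∈ D, IsPlanar (addVertexAdj
      ((SimpleGraph.Subgraph.coeSubgraph C ⊔
        ⨆ B ∈ {B : H.Subgraph | IsBridgeOf S B ∧ φ B = C}, B).coe)
      {x | (x : U) ∈ Subtype.val '' C.verts})

/-- The disk system `D` of `G` has a locally planar extension into `H`. -/
def HasLocallyPlanarExtension {V U : Type u} (G : SimpleGraph V) (D : Set G.Subgraph)
    (H : SimpleGraph U) : Prop :=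
  ∃ (W : Type u) (G' : SimpleGraph W) (D' : Set G'.Subgraph) (newE : Set (Sym2 W)),
    IsConformingExpansion G D G' D' newE ∧
    ∃ (S : H.Subgraph) (sd : SubdivisionData S.coe G'),
      LocallyPlanar H S (sd.inducedDisks D')

/-! ### Degenerate separations -/

/-- A degenerate separation of order three. -/
def Degenerate {V : Type u} (G : SimpleGraph V) (A B : Set V) : Prop :=
  ((A \ B).ncard = 1 ∧ ∀ x ∈ A ∩ B, ∀ y ∈ A ∩ B, ¬ G.Adj x y) ∨
  (∃ v1 v2 v3 u1 u2 u3 : V, A ∩ B = {v1, v2, v3} ∧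
    v1 ≠ v2 ∧ v1 ≠ v3 ∧ v2 ≠ v3 ∧
    u1 ∈ A ∧ u2 ∈ A ∧ u3 ∈ A ∧ G.Adj u1 u2 ∧ G.Adj u1 u3 ∧ G.Adj u2 u3 ∧
    (u1 = v1 ∨ G.Adj u1 v1) ∧ (u2 = v2 ∨ G.Adj u2 v2) ∧ (u3 = v3 ∨ G.Adj u3 v3) ∧
    A ⊆ {u1, u2, u3, v1, v2, v3} ∧
    ∀ x ∈ A, ∀ y ∈ A, G.Adj x y →
      s(x, y) ∈ ({s(u1, v1), s(u2, v2), s(u3, v3),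
                  s(u1, u2), s(u1, u3), s(u2, u3)} : Set (Sym2 V)))

/-!
Splitting a vertex preserves 3-connectivity, so by induction along the expansion it is enough
that `G` is 3-connected. Let `H` arise from a 3-connected `G` by splitting `v` into `v₁ v₂`, and
delete a set `s` of at most two vertices from `H`. Contracting the new edge `v₁v₂` maps `s` to a
set `t` of at most two vertices of `G`, so `G - t` is connected. Each edge of `G - t` lifts to a
path of `H - s`, through the new edge if needed; and each vertex of `H - s` lies in or next to
the lift of `G - t`: if `v ∈ t`, at most one other vertex of `G` is in `t`, while each of `v₁, v₂`
has at least two neighbours besides each other.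
-/

lemma ThreeConnected.finite {V : Type u} {G : SimpleGraph V} (h : ThreeConnected G) :
    Finite V :=
  Nat.finite_of_card_ne_zero (by have := h.1; omega)

lemma Set.exists_mem_notMem_of_ncard_le_two {α : Type*} {N t : Set α} {x : α}
    (hN : 2 ≤ N.ncard) (hxN : x ∉ N) (hxt : x ∈ t) (htf : t.Finite) (ht : t.ncard ≤ 2) :
    ∃ c ∈ N, c ∉ t := by
  have : (t \ {x}).ncard < N.ncard := by
    have := Set.ncard_sdiff_singleton_lt_of_mem hxt htf
    omega
  obtain ⟨c, hcN, hct⟩ := Set.exists_mem_notMem_of_ncard_lt_ncard this htf.sdiff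
  exact ⟨c, hcN, fun h => hct ⟨h, by rintro rfl; exact hxN hcN⟩⟩

namespace SimpleGraph

variable {X Y : Type*} {G : SimpleGraph Y} {K : SimpleGraph X}

lemma Reachable.of_adj_reachable_map (g : Y → X)
    (hadj : ∀ ⦃a b⦄, G.Adj a b → K.Reachable (g a) (g b)) {a b : Y} (h : G.Reachable a b) :
    K.Reachable (g a) (g b) := by
  obtain ⟨p⟩ := h
  induction p with
  | nil => rfl
  | cons hab _ ih => exact (hadj hab).trans ih

lemma Connected.of_adj_reachable_map (hG : G.Connected) (g : Y → X)
    (hadj : ∀ ⦃a b⦄, G.Adj a b → K.Reachable (g a) (g b))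
    (hcover : ∀ x, ∃ a, K.Reachable x (g a)) : K.Connected := by
  have : Nonempty X := ⟨g hG.nonempty.some⟩
  refine (connected_iff K).2 ⟨fun x y => ?_, inferInstance⟩
  obtain ⟨a, hxa⟩ := hcover x
  obtain ⟨b, hyb⟩ := hcover y
  exact hxa.trans ((Reachable.of_adj_reachable_map g hadj (hG.preconnected a b)).trans hyb.symm)

lemma Subgraph.coe_deleteVerts_top_adj {s : Set X} {x y : ((⊤ : K.Subgraph).deleteVerts s).verts} :
    ((⊤ : K.Subgraph).deleteVerts s).coe.Adj x y ↔ K.Adj x y := by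
  simp [x.2.2, y.2.2]

end SimpleGraph

section splitGraph

variable {W : Type u} {G : SimpleGraph W} {v : W} {N1 N2 : Set W}

lemma splitGraph_adj_some_some {a b : W} (ha : a ≠ v) (hb : b ≠ v) (hab : G.Adj a b) :
    (splitGraph G v N1 N2).Adj (some a) (some b) :=
  (fromRel_adj _ _ _).2 ⟨by simpa using hab.ne, .inl (.inl ⟨a, b, rfl, rfl, ha, hb, hab⟩)⟩

lemma splitGraph_adj_self_of_mem_left {b : W} (hb : b ∈ N1) (hvb : v ≠ b) :
    (splitGraph G v N1 N2).Adj (some v) (some b) :=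
  (fromRel_adj _ _ _).2 ⟨by simpa using hvb, .inl (.inr (.inl ⟨rfl, b, hb, rfl⟩))⟩

lemma splitGraph_adj_none_of_mem_right {b : W} (hb : b ∈ N2) :
    (splitGraph G v N1 N2).Adj none (some b) :=
  (fromRel_adj _ _ _).2 ⟨by simp, .inl (.inr (.inr (.inl ⟨rfl, b, hb, rfl⟩)))⟩

lemma splitGraph_adj_none_self : (splitGraph G v N1 N2).Adj none (some v) :=
  (fromRel_adj _ _ _).2 ⟨by simp, .inl (.inr (.inr (.inr ⟨rfl, rfl⟩)))⟩

variable {s : Set (Option W)}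

lemma splitGraph_deleteVerts_reachable_of_adj (hN : N1 ∪ N2 = G.neighborSet v)
    {x y : ((⊤ : (splitGraph G v N1 N2).Subgraph).deleteVerts s).verts} {a c : W}
    (hxa : (x : Option W) = some a) (hyc : (y : Option W) = some c)
    (ha : a ∉ (Option.getD · v) '' s) (hc : c ∉ (Option.getD · v) '' s) (hac : G.Adj a c) :
    ((⊤ : (splitGraph G v N1 N2).Subgraph).deleteVerts s).coe.Reachable x y := by
  obtain ⟨_, _, hxs⟩ := x
  obtain ⟨_, _, hys⟩ := y
  subst hxa hyc
  have adj {p q : Option W} (hp : p ∉ s) (hq : q ∉ s) (hpq : (splitGraph G v N1 N2).Adj p q) :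
      ((⊤ : (splitGraph G v N1 N2).Subgraph).deleteVerts s).coe.Reachable
        ⟨p, trivial, hp⟩ ⟨q, trivial, hq⟩ :=
    (Subgraph.coe_deleteVerts_top_adj.2 hpq).reachable
  by_cases hav : a = v
  · subst hav
    have hnone : none ∉ s := fun h => ha ⟨none, h, rfl⟩
    rcases (hN ▸ hac : c ∈ N1 ∪ N2) with h1 | h2
    · exact adj hxs hys (splitGraph_adj_self_of_mem_left h1 hac.ne)
    · exact (adj hxs hnone splitGraph_adj_none_self.symm).trans
        (adj hnone hys (splitGraph_adj_none_of_mem_right h2))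
  by_cases hcv : c = v
  · subst hcv
    have hnone : none ∉ s := fun h => hc ⟨none, h, rfl⟩
    rcases (hN ▸ hac.symm : a ∈ N1 ∪ N2) with h1 | h2
    · exact adj hxs hys (splitGraph_adj_self_of_mem_left h1 hac.symm.ne).symm
    · exact (adj hxs hnone (splitGraph_adj_none_of_mem_right h2).symm).trans
        (adj hnone hys splitGraph_adj_none_self)
  exact adj hxs hys (splitGraph_adj_some_some hav hcv hac)

lemma splitGraph_deleteVerts_exists_reachable_some [Finite W]
    (hs : IsValidSplitData G v N1 N2) (hst : ((Option.getD · v) '' s).ncard ≤ 2)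
    (x : ((⊤ : (splitGraph G v N1 N2).Subgraph).deleteVerts s).verts) :
    ∃ y : ((⊤ : (splitGraph G v N1 N2).Subgraph).deleteVerts s).verts,
      (∃ a ∉ (Option.getD · v) '' s, (y : Option W) = some a) ∧
      ((⊤ : (splitGraph G v N1 N2).Subgraph).deleteVerts s).coe.Reachable x y := by
  obtain ⟨x, _, hxs⟩ := x
  have adj {q : Option W} (hq : q ∉ s) (hxq : (splitGraph G v N1 N2).Adj x q) :
      ((⊤ : (splitGraph G v N1 N2).Subgraph).deleteVerts s).coe.Reachable
        ⟨x, trivial, hxs⟩ ⟨q, trivial, hq⟩ :=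
    (Subgraph.coe_deleteVerts_top_adj.2 hxq).reachable
  have hvN {N : Set W} (hN : N ⊆ N1 ∪ N2) : v ∉ N :=
    fun h => G.loopless.irrefl v (hs.1 ▸ hN h : v ∈ G.neighborSet v)
  have hsurvivor {N : Set W} (hN : N ⊆ N1 ∪ N2) (hN2 : 2 ≤ N.ncard)
      (hvt : v ∈ (Option.getD · v) '' s) : ∃ c ∈ N, c ∉ (Option.getD · v) '' s :=
    Set.exists_mem_notMem_of_ncard_le_two hN2 (hvN hN) hvt (Set.toFinite _) hst
  cases x with
  | none =>
    by_cases hvt : v ∈ (Option.getD · v) '' s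
    · obtain ⟨c, hc, hct⟩ := hsurvivor Set.subset_union_right hs.2.2.2 hvt
      exact ⟨_, ⟨c, hct, rfl⟩,
        adj (fun h => hct ⟨_, h, rfl⟩) (splitGraph_adj_none_of_mem_right hc)⟩
    · exact ⟨_, ⟨v, hvt, rfl⟩, adj (fun h => hvt ⟨_, h, rfl⟩) splitGraph_adj_none_self⟩
  | some a =>
    by_cases hat : a ∈ (Option.getD · v) '' s
    · obtain rfl : a = v := by
        obtain ⟨_ | b, hb, hba⟩ := hat
        · exact hba.symm
        · obtain rfl : b = a := hba
          exact absurd hb hxs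
      obtain ⟨c, hc, hct⟩ := hsurvivor Set.subset_union_left hs.2.2.1 hat
      have hac : a ≠ c := fun h => hvN Set.subset_union_left (h ▸ hc)
      exact ⟨_, ⟨c, hct, rfl⟩,
        adj (fun h => hct ⟨_, h, rfl⟩) (splitGraph_adj_self_of_mem_left hc hac)⟩
    · exact ⟨_, ⟨a, hat, rfl⟩, .rfl⟩

lemma ThreeConnected.splitGraph [Finite W] (h : ThreeConnected G)
    (hs : IsValidSplitData G v N1 N2) : ThreeConnected (splitGraph G v N1 N2) := by
  refine ⟨by rw [Finite.card_option]; have := h.1; omega, fun s hs2 => ?_⟩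
  have hst : ((Option.getD · v) '' s).ncard ≤ 2 :=
    (Set.ncard_image_le (Set.toFinite s)).trans hs2
  refine (h.2 _ hst).of_adj_reachable_map
    (fun a => ⟨some a.1, trivial, fun h => a.2.2 ⟨_, h, rfl⟩⟩) ?_ fun x => ?_
  · intro ⟨a, _, ha⟩ ⟨c, _, hc⟩ hac
    exact splitGraph_deleteVerts_reachable_of_adj hs.1 rfl rfl ha hc
      (Subgraph.coe_deleteVerts_top_adj.1 hac)
  · obtain ⟨⟨_, _, _⟩, ⟨a, ha, rfl⟩, hxy⟩ := splitGraph_deleteVerts_exists_reachable_some hs hst x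
    exact ⟨⟨a, trivial, ha⟩, hxy⟩

end splitGraph

lemma IsExpansion.threeConnected {V : Type u} {G : SimpleGraph V} (hG : ThreeConnected G)
    {W : Type u} {G' : SimpleGraph W} {π : W → V} {newE : Set (Sym2 W)}
    (h : IsExpansion G G' π newE) : ThreeConnected G' := by
  induction h with
  | refl => exact hG
  | step _ _ _ _ hs ih =>
    have := ih.finite
    exact ih.splitGraph hs

theorem expansion_threeConnected_general {V W : Type u}
    (G : SimpleGraph V) (hG : WeaklyFourConnected G)
    (G' : SimpleGraph W) (π : W → V) (newE : Set (Sym2 W))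
    (h : IsExpansion G G' π newE) :
    ThreeConnected G' :=
  h.threeConnected hG.1

/-- every expansion of a weakly 4-connected graph is 3-connected. -/
theorem expansion_threeConnected {V W : Type u} [Fintype V] [Fintype W]
    (G : SimpleGraph V) (hG : WeaklyFourConnected G)
    (G' : SimpleGraph W) (π : W → V) (newE : Set (Sym2 W))
    (h : IsExpansion G G' π newE) :
    ThreeConnected G' :=
  expansion_threeConnected_general G hG G' π newE h
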